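/- arXiv:math/0508434 — 2 statements merged into one kernel-verified Lean document; each statement's English description precedes it below -/
import Mathlib

section
/- Let n ≥ 3, let k be an integer with 1 < k < d/2 such that 2k divides d, and let (d_{i1}, …, d_{i m_i}) for i = 1, …, n be partitions of d with m₁ + … + mₙ = (n−2)d + 2 such that every d_{1j} is a multiple of k and every d_{2j} and every d_{3j} is even. If these n partitions are realized by permutations, then d_{ij} ≤ d/k for i = 2, 3 and all j, and d_{ij} ≤ d/(2k) for all i = 4, …, n and all j. -/
/-!
Twist a realization `τ` of the branch datum by elements `g_i` of the dihedral group `D_k` of order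
`2k`, namely `r, sr, s, 1, …, 1`: the permutations `(x, u) ↦ (τ_i x, g_i u)` of `Fin d × D_k` again
multiply to `1`. The divisibility hypotheses say exactly that every cycle length of `τ_i` kills
`g_i`, so every cycle of `τ_i` lifts to `2k` cycles and the twisted datum has `2k` times as many
cycles as the original one, which lies on the sphere. The Riemann–Hurwitz inequality
`∑ c(π_i) ≤ (n - 2) N + 2 t`, for permutations `π_i` of `N` points with product `1` generating a
group with `t` orbits, then forces at least `2k` orbits upstairs, so some orbit has at most `d` points.
Since it projects onto `Fin d`, that orbit is the graph of a map `Ψ : Fin d → D_k` with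
`Ψ (τ_i x) = g_i Ψ x`. The `g_i` generate `D_k`, so all fibres of `Ψ` have `d / 2k` points, while a
cycle of `τ_i` only meets the fibres over the coset `⟨g_i⟩ Ψ x`; hence its length is at most
`orderOf g_i * d / 2k`.

The Riemann–Hurwitz inequality is proved by writing each `π_i` as a product of `N - c(π_i)`
transpositions and adding these one at a time: a transposition either merges two orbits of the group
generated so far, and then also two cycles of the product, or it changes the number of cycles of
the product by at most one.
-/

/-- Multiset of cycle lengths of a permutation of a finite type, counting each
fixed point as a cycle of length 1. -/
def fullCycleType {α : Type*} [Fintype α] [DecidableEq α] (τ : Equiv.Perm α) :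
    Multiset ℕ :=
  τ.cycleType + Multiset.replicate (Fintype.card α - τ.cycleType.sum) 1

/-- The `n` partitions `parts 0, …, parts (n-1)` of `d` are realized by permutations:
there are `τ₁, …, τₙ ∈ S_d` with `τ₁ ⋯ τₙ = 1`, generating a subgroup acting
transitively on `{1, …, d}`, where the multiset of cycle lengths of `τᵢ`
(fixed points counting as cycles of length 1) is `parts i`. -/
def realizable (d n : ℕ) (parts : Fin n → Multiset ℕ) : Prop :=
  ∃ τ : Fin n → Equiv.Perm (Fin d),
    (List.ofFn τ).prod = 1 ∧
    (∀ x y : Fin d, ∃ g ∈ Subgroup.closure (Set.range τ), g x = y) ∧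
    ∀ i, fullCycleType (τ i) = parts i

open Equiv Equiv.Perm MulAction Subgroup Finset

namespace Setoid

variable {α : Type*}

def merge (s : Setoid α) (a b : α) : Setoid α where
  r x y := s x y ∨ (s x a ∧ s b y) ∨ (s x b ∧ s a y)
  iseqv := by
    have tr : ∀ {x y z}, s x y → s y z → s x z := s.trans'
    have sy : ∀ {x y}, s x y → s y x := s.symm'
    exact ⟨fun x => .inl (s.refl' x), by grind, by grind⟩

variable {s t : Setoid α} {a b : α}

theorem le_merge : s ≤ s.merge a b := fun _ _ h => .inl h

theorem merge_rel : s.merge a b a b := .inr (.inl ⟨s.refl a, s.refl b⟩)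

theorem merge_swap_apply [DecidableEq α] (x : α) : s.merge a b x (swap a b x) := by
  rcases eq_or_ne x a with rfl | hxa
  · rw [swap_apply_left]; exact merge_rel
  rcases eq_or_ne x b with rfl | hxb
  · rw [swap_apply_right]; exact Setoid.symm' _ merge_rel
  rw [swap_apply_of_ne_of_ne hxa hxb]

theorem merge_le (h : s ≤ t) (hab : t a b) : s.merge a b ≤ t := by
  rintro x y (hxy | ⟨hxa, hby⟩ | ⟨hxb, hay⟩)
  · exact h hxy
  · exact t.trans (h hxa) (t.trans hab (h hby))
  · exact t.trans (h hxb) (t.trans (t.symm hab) (h hay))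

theorem merge_eq_of_rel (hab : s a b) : s.merge a b = s :=
  le_antisymm (merge_le le_rfl hab) le_merge

theorem card_quotient_le_of_le [Finite α] (h : s ≤ t) :
    Nat.card (Quotient t) ≤ Nat.card (Quotient s) :=
  Nat.card_le_card_of_surjective (map_of_le h) fun q => q.inductionOn fun x => ⟨⟦x⟧, rfl⟩

theorem card_quotient_merge [Finite α] (hab : ¬ s a b) :
    Nat.card (Quotient (s.merge a b)) + 1 = Nat.card (Quotient s) := by
  set f : Quotient s → Quotient (s.merge a b) := map_of_le le_merge
  have hinj : Set.InjOn f {⟦b⟧}ᶜ := by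
    rintro ⟨x⟩ hx ⟨y⟩ hy hxy
    have hx : ¬ s x b := fun h => hx (Quotient.sound h)
    have hy : ¬ s y b := fun h => hy (Quotient.sound h)
    rcases Quotient.exact hxy with h | ⟨-, h⟩ | ⟨h, -⟩
    · exact Quotient.sound h
    · exact absurd (s.symm h) hy
    · exact absurd h hx
  have himg : f '' {⟦b⟧}ᶜ = Set.univ := by
    refine Set.eq_univ_of_forall fun q => q.inductionOn fun y => ?_
    by_cases hy : s y b
    · refine ⟨⟦a⟧, fun h => hab (Quotient.exact h), Quotient.sound ?_⟩
      exact .inr (.inl ⟨s.refl a, s.symm hy⟩)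
    · exact ⟨⟦y⟧, fun h => hy (Quotient.exact h), rfl⟩
  rw [← Set.ncard_univ, ← himg, hinj.ncard_image,
    ← Set.ncard_compl_add_ncard {⟦b⟧}, Set.ncard_singleton]

end Setoid

section Orbits

variable {α : Type*}

noncomputable def numOrbits (H : Subgroup (Perm α)) : ℕ := Nat.card (orbitRel.Quotient H α)

theorem orbitRel_closure_le {S : Set (Perm α)} {s : Setoid α} (h : ∀ σ ∈ S, ∀ x, s x (σ x)) :
    orbitRel (closure S) α ≤ s := by
  have key : ∀ σ ∈ closure S, ∀ x, s x (σ x) := by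
    intro σ hσ
    induction hσ using closure_induction with
    | mem σ hσ => exact h σ hσ
    | one => exact s.refl
    | mul σ τ _ _ hσ hτ => exact fun x => s.trans (hτ x) (hσ (τ x))
    | inv σ _ hσ => exact fun x => s.symm (by simpa using hσ (σ⁻¹ x))
  rintro x y ⟨⟨σ, hσ⟩, rfl⟩
  exact s.symm (key σ hσ y)

theorem orbitRel_mono {H K : Subgroup (Perm α)} (h : H ≤ K) : orbitRel H α ≤ orbitRel K α := by
  rintro x y ⟨⟨σ, hσ⟩, rfl⟩
  exact ⟨⟨σ, h hσ⟩, rfl⟩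

theorem orbitRel_bot : orbitRel (⊥ : Subgroup (Perm α)) α = ⊥ := by
  ext x y
  refine ⟨?_, fun h => h ▸ mem_orbit_self x⟩
  rintro ⟨⟨σ, hσ⟩, rfl⟩
  rw [mem_bot] at hσ
  subst hσ
  rfl

theorem orbitRel_zpowers (σ : Perm α) : orbitRel (zpowers σ) α = SameCycle.setoid σ := by
  ext x y
  change x ∈ orbit _ y ↔ σ.SameCycle x y
  rw [sameCycle_comm]
  constructor
  · rintro ⟨⟨_, i, rfl⟩, rfl⟩
    exact ⟨i, rfl⟩
  · rintro ⟨i, rfl⟩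
    exact ⟨⟨σ ^ i, i, rfl⟩, rfl⟩

theorem orbitRel_closure_insert_swap [DecidableEq α] (S : Set (Perm α)) (a b : α) :
    orbitRel (closure (insert (swap a b) S)) α = (orbitRel (closure S) α).merge a b := by
  refine le_antisymm (orbitRel_closure_le ?_) (Setoid.merge_le ?_ ?_)
  · rintro σ (rfl | hσ) x
    · exact Setoid.merge_swap_apply x
    · exact Setoid.le_merge ((orbitRel _ α).symm ⟨⟨σ, subset_closure hσ⟩, rfl⟩)
  · exact orbitRel_mono (closure_mono (Set.subset_insert _ _))
  · exact ⟨⟨swap a b, subset_closure (Set.mem_insert _ _)⟩, swap_apply_right a b⟩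

theorem numOrbits_closure_insert_swap_of_rel [DecidableEq α] {S : Set (Perm α)} {a b : α}
    (h : orbitRel (closure S) α a b) :
    numOrbits (closure (insert (swap a b) S)) = numOrbits (closure S) := by
  rw [numOrbits, orbitRel.Quotient, orbitRel_closure_insert_swap, Setoid.merge_eq_of_rel h]
  rfl

variable [Fintype α]

theorem numOrbits_anti {H K : Subgroup (Perm α)} (h : H ≤ K) : numOrbits K ≤ numOrbits H :=
  Setoid.card_quotient_le_of_le (orbitRel_mono h)

theorem numOrbits_bot : numOrbits (⊥ : Subgroup (Perm α)) = Fintype.card α := by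
  rw [numOrbits, orbitRel.Quotient, orbitRel_bot, Nat.card_congr Setoid.quotientBotEquiv,
    Nat.card_eq_fintype_card]

theorem numOrbits_le_card (H : Subgroup (Perm α)) : numOrbits H ≤ Fintype.card α :=
  numOrbits_bot (α := α) ▸ numOrbits_anti bot_le

theorem numOrbits_closure_insert_swap [DecidableEq α] {S : Set (Perm α)} {a b : α}
    (h : ¬ orbitRel (closure S) α a b) :
    numOrbits (closure (insert (swap a b) S)) + 1 = numOrbits (closure S) := by
  rw [numOrbits, orbitRel.Quotient, orbitRel_closure_insert_swap]
  exact Setoid.card_quotient_merge h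

theorem exists_ncard_orbit_le [Nonempty α] (H : Subgroup (Perm α)) {m : ℕ}
    (h : Fintype.card α ≤ numOrbits H * m) : ∃ x : α, (orbit H x).ncard ≤ m := by
  classical
  have : Nonempty (Quotient (orbitRel H α)) := .map Quotient.mk'' ‹_›
  rw [numOrbits, Nat.card_eq_fintype_card] at h
  obtain ⟨q, hq⟩ := Fintype.exists_card_fiber_le_of_card_le_mul (Quotient.mk (orbitRel H α)) h
  induction q using Quotient.inductionOn with | h p => ?_
  refine ⟨p, ?_⟩
  have : orbit H p = ↑({x | Quotient.mk _ x = Quotient.mk (orbitRel H α) p} : Finset α) := by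
    ext x
    simp [Quotient.eq, orbitRel_apply]
  rwa [this, Set.ncard_coe_finset]

end Orbits

section Cycles

variable {α : Type*}

noncomputable def numCycles (σ : Perm α) : ℕ := numOrbits (zpowers σ)

theorem numCycles_one [Fintype α] : numCycles (1 : Perm α) = Fintype.card α := by
  rw [numCycles, zpowers_one_eq_bot, numOrbits_bot]

theorem numCycles_le_card [Fintype α] (σ : Perm α) : numCycles σ ≤ Fintype.card α :=
  numOrbits_le_card _

variable [DecidableEq α]

theorem orbitRel_zpowers_swap_mul_le (σ : Perm α) (a b : α) :
    orbitRel (zpowers (swap a b * σ)) α ≤ (orbitRel (zpowers σ) α).merge a b := by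
  rw [zpowers_eq_closure]
  refine orbitRel_closure_le ?_
  rintro _ rfl x
  have hx : orbitRel (zpowers σ) α x (σ x) := by
    rw [orbitRel_zpowers]
    exact sameCycle_apply_right.2 (SameCycle.refl σ x)
  exact Setoid.trans' _ (Setoid.le_merge hx) (Setoid.merge_swap_apply (σ x))

variable [Fintype α]

/-- Following `σ` from `b` never meets `a`, so `swap a b * σ` agrees with `σ` along the cycle of
`b` until that cycle closes up, where it is sent to `a` instead. -/
theorem sameCycle_swap_mul_of_not_sameCycle {σ : Perm α} {a b : α} (h : ¬ σ.SameCycle a b) :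
    (swap a b * σ).SameCycle a b := by
  have walk : ∀ n : ℕ, (swap a b * σ).SameCycle b ((σ ^ n) b) := by
    intro n
    induction n with
    | zero => exact SameCycle.refl _ b
    | succ n ih =>
      rw [pow_succ', mul_apply]
      by_cases hb : σ ((σ ^ n) b) = b
      · rw [hb]
      have hsc : σ.SameCycle b (σ ((σ ^ n) b)) := by simpa using SameCycle.refl σ b
      have ha : σ ((σ ^ n) b) ≠ a := fun ha => h (ha ▸ hsc).symm
      have := ih.apply_right
      rwa [mul_apply, swap_apply_of_ne_of_ne ha hb] at this
  obtain ⟨n, -, hn⟩ := (sameCycle_symm_apply_right.2 (SameCycle.refl σ b)).exists_pow_eq'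
  have := (hn ▸ walk n).apply_right
  rw [mul_apply, apply_symm_apply, swap_apply_right] at this
  exact this.symm

theorem orbitRel_zpowers_swap_mul {σ : Perm α} {a b : α} (h : ¬ σ.SameCycle a b) :
    orbitRel (zpowers (swap a b * σ)) α = (orbitRel (zpowers σ) α).merge a b := by
  have hab : orbitRel (zpowers (swap a b * σ)) α a b := by
    rw [orbitRel_zpowers]
    exact sameCycle_swap_mul_of_not_sameCycle h
  refine le_antisymm (orbitRel_zpowers_swap_mul_le σ a b) (Setoid.merge_le ?_ hab)
  have := orbitRel_zpowers_swap_mul_le (swap a b * σ) a b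
  rwa [swap_mul_self_mul, Setoid.merge_eq_of_rel hab] at this

theorem numCycles_swap_mul_add_one {σ : Perm α} {a b : α} (h : ¬ σ.SameCycle a b) :
    numCycles (swap a b * σ) + 1 = numCycles σ := by
  rw [numCycles, numOrbits, orbitRel.Quotient, orbitRel_zpowers_swap_mul h]
  refine Setoid.card_quotient_merge ?_
  rwa [orbitRel_zpowers]

theorem numCycles_swap_mul_le (σ : Perm α) (a b : α) :
    numCycles (swap a b * σ) ≤ numCycles σ + 1 := by
  by_cases h : (swap a b * σ).SameCycle a b
  · have hab : orbitRel (zpowers (swap a b * σ)) α a b := by rwa [orbitRel_zpowers]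
    have := orbitRel_zpowers_swap_mul_le (swap a b * σ) a b
    rw [swap_mul_self_mul, Setoid.merge_eq_of_rel hab] at this
    exact (Setoid.card_quotient_le_of_le this).trans (Nat.le_succ _)
  · have := numCycles_swap_mul_add_one h
    rw [swap_mul_self_mul] at this
    omega

theorem numCycles_swap_mul_of_apply_ne {σ : Perm α} {x : α} (hx : σ x ≠ x) :
    numCycles (swap x (σ x) * σ) = numCycles σ + 1 := by
  have hfix : (swap x (σ x) * σ) x = x := by rw [mul_apply, swap_apply_right]
  have h : ¬ (swap x (σ x) * σ).SameCycle x (σ x) := fun h => hx (h.eq_of_left hfix).symm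
  have := numCycles_swap_mul_add_one h
  rw [swap_mul_self_mul] at this
  omega

theorem numCycles_eq_card_iff {σ : Perm α} : numCycles σ = Fintype.card α ↔ σ = 1 := by
  refine ⟨fun h => ?_, fun h => h ▸ numCycles_one⟩
  by_contra hσ
  obtain ⟨x, hx⟩ : ∃ x, σ x ≠ x := by
    by_contra! h'
    exact hσ (Perm.ext h')
  have h₁ := numCycles_swap_mul_of_apply_ne hx
  have h₂ := numCycles_le_card (swap x (σ x) * σ)
  omega

theorem exists_isSwap_list_prod_eq (σ : Perm α) :
    ∃ T : List (Perm α), (∀ t ∈ T, t.IsSwap) ∧ T.prod = σ ∧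
      T.length + numCycles σ = Fintype.card α := by
  obtain ⟨m, hm⟩ := Nat.exists_eq_add_of_le (numCycles_le_card σ)
  induction m generalizing σ with
  | zero => exact ⟨[], by simp, (numCycles_eq_card_iff.1 hm.symm).symm, by simp [hm]⟩
  | succ m ih =>
    have hσ : σ ≠ 1 := fun h => by
      rw [numCycles_eq_card_iff.2 h] at hm
      omega
    obtain ⟨x, hx⟩ : ∃ x, σ x ≠ x := by
      by_contra! h'
      exact hσ (Perm.ext h')
    obtain ⟨T, hT, hprod, hlen⟩ := ih (swap x (σ x) * σ)
      (by rw [numCycles_swap_mul_of_apply_ne hx]; omega)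
    refine ⟨swap x (σ x) :: T, ?_, by rw [List.prod_cons, hprod, swap_mul_self_mul], ?_⟩
    · intro t ht
      rcases List.mem_cons.1 ht with rfl | ht
      · exact ⟨x, σ x, Ne.symm hx, rfl⟩
      · exact hT t ht
    · rw [numCycles_swap_mul_of_apply_ne hx] at hlen
      simp only [List.length_cons]
      omega

end Cycles

section RiemannHurwitz

variable {α : Type*} [Fintype α] [DecidableEq α]

theorem card_add_numCycles_prod_le (T : List (Perm α)) (hT : ∀ t ∈ T, t.IsSwap) :
    Fintype.card α + numCycles T.prod ≤ T.length + 2 * numOrbits (closure {t | t ∈ T}) := by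
  induction T with
  | nil =>
    simp only [List.prod_nil, numCycles_one, List.not_mem_nil, Set.ofPred_false,
      Subgroup.closure_empty, numOrbits_bot, List.length_nil]
    omega
  | cons t T ih =>
    obtain ⟨a, b, -, rfl⟩ := hT t List.mem_cons_self
    have ih := ih fun t ht => hT t (List.mem_cons_of_mem _ ht)
    have hS : {t | t ∈ swap a b :: T} = insert (swap a b) {t | t ∈ T} := by
      ext; simp
    rw [List.prod_cons, List.length_cons, hS]
    by_cases hab : orbitRel (closure {t | t ∈ T}) α a b
    · rw [numOrbits_closure_insert_swap_of_rel hab]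
      have := numCycles_swap_mul_le T.prod a b
      omega
    · have hprod : ¬ T.prod.SameCycle a b := fun h => hab <| by
        refine orbitRel_mono (zpowers_le.2 (list_prod_mem fun t ht => subset_closure ht)) ?_
        rwa [orbitRel_zpowers]
      have h₁ := numOrbits_closure_insert_swap hab
      have h₂ := numCycles_swap_mul_add_one hprod
      omega

theorem sum_numCycles_add_le {n : ℕ} (π : Fin n → Perm α) (hπ : (List.ofFn π).prod = 1) :
    ∑ i, numCycles (π i) + 2 * Fintype.card α ≤
      n * Fintype.card α + 2 * numOrbits (closure (Set.range π)) := by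
  choose T hT hprod hlen using fun i => exists_isSwap_list_prod_eq (π i)
  set L := (List.ofFn T).flatten
  have hL : ∀ t ∈ L, t.IsSwap := by
    intro t ht
    obtain ⟨_, hl, ht⟩ := List.mem_flatten.1 ht
    obtain ⟨i, rfl⟩ := List.mem_ofFn.1 hl
    exact hT i t ht
  have hLprod : L.prod = 1 := by
    rw [List.prod_flatten, List.map_ofFn, ← hπ]
    exact congrArg _ (List.ofFn_inj.2 (funext hprod))
  have hLlen : L.length = ∑ i, (T i).length := by
    rw [List.length_flatten, List.map_ofFn, List.sum_ofFn]
    rfl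
  have hle : closure (Set.range π) ≤ closure {t | t ∈ L} := by
    refine closure_le _ |>.2 ?_
    rintro _ ⟨i, rfl⟩
    rw [← hprod i]
    exact list_prod_mem fun t ht =>
      subset_closure (List.mem_flatten.2 ⟨T i, List.mem_ofFn.2 ⟨i, rfl⟩, ht⟩)
  have hRH := card_add_numCycles_prod_le L hL
  rw [hLprod, numCycles_one] at hRH
  have hsum : ∑ i, (T i).length + ∑ i, numCycles (π i) = n * Fintype.card α := by
    rw [← Finset.sum_add_distrib, Finset.sum_congr rfl fun i _ => hlen i]
    simp
  have := numOrbits_anti hle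
  omega

end RiemannHurwitz

section FullCycleType

variable {α : Type*} [Fintype α] [DecidableEq α]

theorem image_cycleOf_support (σ : Perm α) : σ.support.image σ.cycleOf = σ.cycleFactorsFinset := by
  ext c
  simp only [Finset.mem_image]
  constructor
  · rintro ⟨x, hx, rfl⟩
    exact cycleOf_mem_cycleFactorsFinset_iff.2 hx
  · intro hc
    obtain ⟨a, ha⟩ := (mem_cycleFactorsFinset_iff.1 hc).1.nonempty_support
    exact ⟨a, mem_cycleFactorsFinset_support_le hc ha, (cycle_is_cycleOf ha hc).symm⟩

theorem card_fullCycleType (σ : Perm α) : (fullCycleType σ).card = numCycles σ := by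
  let F : α → Perm α ⊕ α := fun x => if x ∈ σ.support then .inl (σ.cycleOf x) else .inr x
  have hker : SameCycle.setoid σ = Setoid.ker F := by
    ext x y
    change σ.SameCycle x y ↔ F x = F y
    by_cases hx : x ∈ σ.support <;> by_cases hy : y ∈ σ.support <;>
      simp only [F, hx, hy, if_true, if_false, Sum.inl.injEq, Sum.inr.injEq, reduceCtorEq,
        iff_false]
    · refine ⟨SameCycle.cycleOf_eq, fun h => ?_⟩
      have := mem_support_cycleOf_iff.2 ⟨SameCycle.refl σ y, hy⟩
      exact (mem_support_cycleOf_iff.1 (h ▸ this)).1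
    · exact fun h => hy (h.eq_of_right (notMem_support.1 hy) ▸ hx)
    · exact fun h => hx (h.eq_of_left (notMem_support.1 hx) ▸ hy)
    · exact ⟨fun h => h.eq_of_left (notMem_support.1 hx), fun h => h ▸ SameCycle.refl σ x⟩
  have himage : Finset.univ.image F =
      σ.cycleFactorsFinset.map .inl ∪ σ.supportᶜ.map .inr := by
    rw [← image_cycleOf_support, ← Finset.union_compl σ.support, Finset.image_union]
    congr 1
    · rw [Finset.map_eq_image, Finset.image_image]
      exact Finset.image_congr fun x hx => if_pos hx
    · rw [Finset.map_eq_image]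
      exact Finset.image_congr fun x hx => if_neg (Finset.mem_compl.1 hx)
  rw [numCycles, numOrbits, orbitRel.Quotient, orbitRel_zpowers, hker,
    Nat.card_congr (Setoid.quotientKerEquivRange F), Nat.card_eq_fintype_card,
    ← Set.toFinset_card, Set.toFinset_range, himage,
    Finset.card_union_of_disjoint (Finset.disjoint_left.2 (by simp)), Finset.card_map,
    Finset.card_map, Finset.card_compl, fullCycleType, Multiset.card_add, Multiset.card_replicate,
    sum_cycleType, cycleType_def, Multiset.card_map]
  rfl

theorem mem_fullCycleType_iff {σ : Perm α} {ℓ : ℕ} :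
    ℓ ∈ fullCycleType σ ↔ ∃ x, orderOf (σ.cycleOf x) = ℓ := by
  rw [fullCycleType, sum_cycleType, Multiset.mem_add, cycleType_def, Multiset.mem_map,
    Multiset.mem_replicate]
  constructor
  · rintro (⟨c, hc, rfl⟩ | ⟨hne, rfl⟩)
    · obtain ⟨a, ha⟩ := (mem_cycleFactorsFinset_iff.1 hc).1.nonempty_support
      refine ⟨a, ?_⟩
      rw [← cycle_is_cycleOf ha hc, (mem_cycleFactorsFinset_iff.1 hc).1.orderOf]
      rfl
    · obtain ⟨x, hx⟩ : ∃ x, x ∉ σ.support := by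
        by_contra! h
        exact hne (by rw [Finset.eq_univ_of_forall h, Finset.card_univ, Nat.sub_self])
      exact ⟨x, by rw [(cycleOf_eq_one_iff σ).2 (notMem_support.1 hx), orderOf_one]⟩
  · rintro ⟨x, rfl⟩
    by_cases hx : x ∈ σ.support
    · refine .inl ⟨σ.cycleOf x, cycleOf_mem_cycleFactorsFinset_iff.2 hx, ?_⟩
      exact ((isCycle_cycleOf σ (mem_support.1 hx)).orderOf).symm
    · refine .inr ⟨?_, by rw [(cycleOf_eq_one_iff σ).2 (notMem_support.1 hx), orderOf_one]⟩
      have := Finset.card_lt_univ_of_notMem hx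
      omega

theorem card_sameCycle_eq_orderOf_cycleOf (σ : Perm α) (x : α) :
    #{y | σ.SameCycle x y} = orderOf (σ.cycleOf x) := by
  by_cases hx : x ∈ σ.support
  · rw [(isCycle_cycleOf σ (mem_support.1 hx)).orderOf]
    congr 1
    ext y
    rw [Finset.mem_filter, mem_support_cycleOf_iff]
    simp [hx]
  · have hfix := notMem_support.1 hx
    rw [(cycleOf_eq_one_iff σ).2 hfix, orderOf_one, Finset.card_eq_one]
    refine ⟨x, Finset.ext fun y => ?_⟩
    simpa using ⟨fun h => (h.eq_of_left hfix).symm, fun h => h ▸ SameCycle.refl σ x⟩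

theorem orderOf_cycleOf_dvd_of_pow_apply_eq_self {σ : Perm α} {x : α} {i : ℕ}
    (h : (σ ^ i) x = x) : orderOf (σ.cycleOf x) ∣ i := by
  by_cases hx : σ x = x
  · rw [(cycleOf_eq_one_iff σ).2 hx, orderOf_one]
    exact one_dvd i
  · refine orderOf_dvd_of_pow_eq_one (((isCycle_cycleOf σ hx).pow_eq_one_iff' (x := x) ?_).2 ?_)
    · rwa [cycleOf_apply_self]
    · rwa [cycleOf_pow_apply_self]

end FullCycleType

section Twist

variable {α G : Type*} [Group G]

def prodMulLeftHom : Perm α × G →* Perm (α × G) where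
  toFun p := p.1.prodCongr (Equiv.mulLeft p.2)
  map_one' := by ext <;> simp
  map_mul' p q := by ext <;> simp [mul_assoc]

@[simp]
theorem prodMulLeftHom_apply (p : Perm α × G) (x : α × G) :
    prodMulLeftHom p x = (p.1 x.1, p.2 * x.2) := rfl

theorem list_prod_ofFn_prodMk {M N : Type*} [Monoid M] [Monoid N] {n : ℕ} (f : Fin n → M)
    (g : Fin n → N) :
    (List.ofFn fun i => (f i, g i)).prod = ((List.ofFn f).prod, (List.ofFn g).prod) := by
  ext
  · simpa [List.map_ofFn, Function.comp_def] using
      map_list_prod (MonoidHom.fst M N) (List.ofFn fun i => (f i, g i))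
  · simpa [List.map_ofFn, Function.comp_def] using
      map_list_prod (MonoidHom.snd M N) (List.ofFn fun i => (f i, g i))

theorem card_mul_numCycles_le_numCycles_prodMulLeftHom [Fintype α] [DecidableEq α] [Finite G]
    (σ : Perm α) (g : G) (hg : ∀ ℓ ∈ fullCycleType σ, g ^ ℓ = 1) :
    Nat.card G * numCycles σ ≤ numCycles (prodMulLeftHom (σ, g)) := by
  rw [numCycles, numCycles, numOrbits, numOrbits, orbitRel.Quotient, orbitRel.Quotient,
    orbitRel_zpowers, orbitRel_zpowers, mul_comm, ← Nat.card_prod]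
  refine Nat.card_le_card_of_injective (fun p => ⟦(p.1.out, p.2)⟧) ?_
  rintro ⟨q, u⟩ ⟨q', u'⟩ h
  obtain ⟨i, -, hi⟩ :=
    (Quotient.exact h : (prodMulLeftHom (σ, g)).SameCycle _ _).exists_pow_eq'
  rw [← map_pow, Prod.pow_mk, prodMulLeftHom_apply, Prod.mk.injEq] at hi
  dsimp only at hi
  obtain rfl : q = q' := by
    rw [← q.out_eq, ← q'.out_eq]
    exact Quotient.sound ⟨i, by exact_mod_cast hi.1⟩
  have hgi : g ^ i = 1 := by
    obtain ⟨j, hj⟩ := orderOf_cycleOf_dvd_of_pow_apply_eq_self hi.1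
    rw [hj, pow_mul, hg _ (mem_fullCycleType_iff.2 ⟨_, rfl⟩), one_pow]
  rw [← hi.2, hgi, one_mul]

theorem exists_equivariant_of_ncard_orbit_le [Finite α] [Finite G] {K : Subgroup (Perm α × G)}
    {p₀ : α × G} (htrans : ∀ x, ∃ σ ∈ K.map (MonoidHom.fst _ _), σ p₀.1 = x)
    (horb : (orbit (K.map prodMulLeftHom) p₀).ncard ≤ Nat.card α) :
    ∃ Ψ : α → G, ∀ p ∈ K, ∀ x, Ψ (p.1 x) = p.2 * Ψ x := by
  set O := orbit (K.map prodMulLeftHom) p₀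
  have hmem : ∀ p ∈ K, ∀ y ∈ O, prodMulLeftHom p y ∈ O := by
    rintro p hp _ ⟨⟨h, hh⟩, rfl⟩
    exact ⟨⟨prodMulLeftHom p * h, mul_mem (mem_map_of_mem _ hp) hh⟩, rfl⟩
  have hsurj : ∀ x, ∃ u, (x, u) ∈ O := by
    intro x
    obtain ⟨σ, ⟨p, hp, rfl⟩, rfl⟩ := htrans x
    exact ⟨p.2 * p₀.2, hmem p hp p₀ (mem_orbit_self p₀)⟩
  choose Ψ hΨ using hsurj
  have hgraph : Set.range (fun x => (x, Ψ x)) = O := by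
    refine Set.eq_of_subset_of_ncard_le (Set.range_subset_iff.2 hΨ) ?_ (Set.toFinite O)
    rwa [Set.ncard_range_of_injective fun x y h => congrArg Prod.fst h]
  refine ⟨Ψ, fun p hp x => ?_⟩
  obtain ⟨y, hy⟩ := hgraph ▸ hmem p hp _ (hΨ x)
  simp only [prodMulLeftHom_apply, Prod.mk.injEq] at hy
  rw [← hy.2, hy.1]

theorem card_fiber_eq_of_equivariant [Fintype α] [DecidableEq G] {K : Subgroup (Perm α × G)}
    (hK : K.map (MonoidHom.snd _ _) = ⊤) {Ψ : α → G} (hΨ : ∀ p ∈ K, ∀ x, Ψ (p.1 x) = p.2 * Ψ x)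
    (u v : G) : #{x | Ψ x = u} = #{x | Ψ x = v} := by
  have key : ∀ u v, #{x | Ψ x = u} ≤ #{x | Ψ x = v} := by
    intro u v
    obtain ⟨p, hp, hpv⟩ : v * u⁻¹ ∈ K.map (MonoidHom.snd _ _) := hK ▸ mem_top _
    refine card_le_card_of_injOn p.1 (fun x hx => ?_) p.1.injective.injOn
    have hpv : p.2 = v * u⁻¹ := hpv
    simp only [coe_filter, mem_univ, true_and, Set.mem_ofPred_eq] at hx ⊢
    rw [hΨ p hp, hx, hpv, inv_mul_cancel_right]
  exact le_antisymm (key u v) (key v u)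

theorem card_sameCycle_le_of_equivariant [Fintype α] [DecidableEq α] [Finite G] [DecidableEq G]
    {Ψ : α → G} {σ : Perm α} {h : G} (hΨ : ∀ x, Ψ (σ x) = h * Ψ x) {c : ℕ}
    (hc : ∀ u, #{x | Ψ x = u} ≤ c) (a : α) : #{y | σ.SameCycle a y} ≤ orderOf h * c := by
  have hpow : ∀ (j : ℕ) x, Ψ ((σ ^ j) x) = h ^ j * Ψ x := by
    intro j
    induction j with
    | zero => simp
    | succ j ih => intro x; rw [pow_succ', mul_apply, hΨ, ih, pow_succ', mul_assoc]
  calc #{y | σ.SameCycle a y}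
      ≤ #((range (orderOf h)).biUnion fun j => {y | Ψ y = h ^ j * Ψ a}) := by
        refine card_le_card fun y hy => ?_
        obtain ⟨j, -, rfl⟩ := (mem_filter.1 hy).2.exists_pow_eq'
        simp only [mem_biUnion, mem_range, mem_filter, mem_univ, true_and]
        exact ⟨j % orderOf h, Nat.mod_lt _ (orderOf_pos h), by rw [hpow, pow_mod_orderOf]⟩
    _ ≤ ∑ j ∈ range (orderOf h), #{y | Ψ y = h ^ j * Ψ a} := card_biUnion_le
    _ ≤ orderOf h * c :=
        (sum_le_card_nsmul (range (orderOf h)) _ c fun j _ => hc _).trans_eq (by simp)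

end Twist

section Sphere

variable {α G : Type*} [Fintype α] [DecidableEq α] [Group G] [Fintype G] {n : ℕ}
  (τ : Fin n → Perm α) (g : Fin n → G)

theorem card_le_numOrbits_of_sphere (hτ : (List.ofFn τ).prod = 1) (hg : (List.ofFn g).prod = 1)
    (hcyc : ∀ i, ∀ ℓ ∈ fullCycleType (τ i), g i ^ ℓ = 1)
    (hsphere : n * Fintype.card α + 2 ≤ ∑ i, (fullCycleType (τ i)).card + 2 * Fintype.card α) :
    Fintype.card G ≤ numOrbits (closure (Set.range fun i => prodMulLeftHom (τ i, g i))) := by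
  classical
  have hprod : (List.ofFn fun i => prodMulLeftHom (τ i, g i)).prod = 1 := by
    change (List.ofFn (prodMulLeftHom ∘ fun i => (τ i, g i))).prod = 1
    rw [← List.map_ofFn, ← map_list_prod, list_prod_ofFn_prodMk, hτ, hg,
      Prod.mk_one_one, map_one]
  have hRH := sum_numCycles_add_le _ hprod
  have hlift : Fintype.card G * ∑ i, numCycles (τ i) ≤
      ∑ i, numCycles (prodMulLeftHom (τ i, g i)) := by
    rw [mul_sum]
    exact sum_le_sum fun i _ => by
      simpa using card_mul_numCycles_le_numCycles_prodMulLeftHom (τ i) (g i) (hcyc i)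
  simp only [card_fullCycleType] at hsphere
  rw [Fintype.card_prod] at hRH
  have := Nat.mul_le_mul_left (Fintype.card G) hsphere
  linarith

theorem exists_equivariant_of_sphere (hτ : (List.ofFn τ).prod = 1) (hg : (List.ofFn g).prod = 1)
    (htrans : ∀ x y : α, ∃ σ ∈ closure (Set.range τ), σ x = y)
    (hcyc : ∀ i, ∀ ℓ ∈ fullCycleType (τ i), g i ^ ℓ = 1)
    (hsphere : n * Fintype.card α + 2 ≤ ∑ i, (fullCycleType (τ i)).card + 2 * Fintype.card α) :
    ∃ Ψ : α → G, ∀ p ∈ closure (Set.range fun i => (τ i, g i)), ∀ x, Ψ (p.1 x) = p.2 * Ψ x := by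
  set K := closure (Set.range fun i => (τ i, g i))
  have hK : closure (Set.range fun i => prodMulLeftHom (τ i, g i)) = K.map prodMulLeftHom := by
    rw [MonoidHom.map_closure, ← Set.range_comp]
    rfl
  have hG := card_le_numOrbits_of_sphere τ g hτ hg hcyc hsphere
  have : Nonempty (α × G) := by
    have := numOrbits_le_card (closure (Set.range fun i => prodMulLeftHom (τ i, g i)))
    have := Fintype.card_pos (α := G)
    exact Fintype.card_pos_iff.1 (by omega)
  obtain ⟨p₀, hp₀⟩ := exists_ncard_orbit_le (closure (Set.range fun i => prodMulLeftHom (τ i, g i)))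
      (m := Fintype.card α) (by rw [Fintype.card_prod, mul_comm]; exact Nat.mul_le_mul_right _ hG)
  rw [hK, ← Nat.card_eq_fintype_card] at hp₀
  refine exists_equivariant_of_ncard_orbit_le (fun x => ?_) hp₀
  obtain ⟨σ, hσ, hσx⟩ := htrans p₀.1 x
  refine ⟨σ, ?_, hσx⟩
  rwa [MonoidHom.map_closure, ← Set.range_comp]

theorem card_mul_le_orderOf_mul_card (hτ : (List.ofFn τ).prod = 1) (hg : (List.ofFn g).prod = 1)
    (hgen : closure (Set.range g) = ⊤)
    (htrans : ∀ x y : α, ∃ σ ∈ closure (Set.range τ), σ x = y)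
    (hcyc : ∀ i, ∀ ℓ ∈ fullCycleType (τ i), g i ^ ℓ = 1)
    (hsphere : n * Fintype.card α + 2 ≤ ∑ i, (fullCycleType (τ i)).card + 2 * Fintype.card α)
    (i : Fin n) {ℓ : ℕ} (hℓ : ℓ ∈ fullCycleType (τ i)) :
    Fintype.card G * ℓ ≤ orderOf (g i) * Fintype.card α := by
  classical
  obtain ⟨Ψ, hΨ⟩ := exists_equivariant_of_sphere τ g hτ hg htrans hcyc hsphere
  have hsnd : (closure (Set.range fun i => (τ i, g i))).map (MonoidHom.snd _ _) = ⊤ := by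
    rw [MonoidHom.map_closure, ← Set.range_comp]
    exact hgen
  have hfib := card_fiber_eq_of_equivariant hsnd hΨ
  have hcard : Fintype.card α = Fintype.card G * #{x | Ψ x = 1} := by
    rw [← card_univ, card_eq_sum_card_fiberwise (f := Ψ) (t := univ) (fun _ _ => mem_univ _),
      sum_congr rfl fun u _ => hfib u 1, sum_const, card_univ, smul_eq_mul]
  obtain ⟨a, rfl⟩ := mem_fullCycleType_iff.1 hℓ
  have hcyc := card_sameCycle_le_of_equivariant (hΨ _ (subset_closure ⟨i, rfl⟩))
    (fun u => (hfib u 1).le) a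
  rw [card_sameCycle_eq_orderOf_cycleOf] at hcyc
  rw [hcard, mul_left_comm]
  exact Nat.mul_le_mul_left _ hcyc

end Sphere

section Dihedral

open DihedralGroup

def dihedralMonodromy (k n : ℕ) (i : Fin n) : DihedralGroup k :=
  if (i : ℕ) = 0 then r 1 else if (i : ℕ) = 1 then sr 1 else if (i : ℕ) = 2 then sr 0 else 1

theorem list_prod_ofFn_dihedralMonodromy (k : ℕ) {n : ℕ} (hn : 3 ≤ n) :
    (List.ofFn (dihedralMonodromy k n)).prod = 1 := by
  obtain ⟨m, rfl⟩ := Nat.exists_eq_add_of_le' hn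
  simp [List.ofFn_succ, dihedralMonodromy]

theorem closure_range_dihedralMonodromy (k : ℕ) [NeZero k] {n : ℕ} (hn : 3 ≤ n) :
    closure (Set.range (dihedralMonodromy k n)) = ⊤ := by
  have hr : r 1 ∈ closure (Set.range (dihedralMonodromy k n)) :=
    subset_closure ⟨⟨0, by omega⟩, rfl⟩
  have hsr : sr 0 ∈ closure (Set.range (dihedralMonodromy k n)) :=
    subset_closure ⟨⟨2, by omega⟩, rfl⟩
  have hri : ∀ i : ZMod k, r i ∈ closure (Set.range (dihedralMonodromy k n)) := fun i => by
    rw [← ZMod.natCast_zmod_val i, ← r_one_pow]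
    exact pow_mem hr _
  refine eq_top_iff.2 fun x _ => ?_
  cases x with
  | r i => exact hri i
  | sr i => simpa using mul_mem hsr (hri i)

theorem dihedralMonodromy_of_three_le (k : ℕ) {n : ℕ} {i : Fin n} (hi : 3 ≤ (i : ℕ)) :
    dihedralMonodromy k n i = 1 := by
  simp [dihedralMonodromy, show (i : ℕ) ≠ 0 by omega, show (i : ℕ) ≠ 1 by omega,
    show (i : ℕ) ≠ 2 by omega]

end Dihedral

/-- Corollary 1.5. Suppose `2k ∣ d` with `1 < k < d/2`, all
parts of the first partition are multiples of `k`, and all parts of the second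
and third partitions are even. If the branch datum `(S², S², n, d, (d_{ij}))`
is realizable then `d_{ij} ≤ d/k` for `i = 2, 3` and `d_{ij} ≤ d/(2k)` for
`i ≥ 4`. -/
theorem stmt6 (d n k : ℕ) (hn : 3 ≤ n) (parts : Fin n → Multiset ℕ)
    (hcard : ∑ i, (parts i).card = (n - 2) * d + 2)
    (hk1 : 1 < k)
    (h1 : ∀ x ∈ parts ⟨0, by omega⟩, k ∣ x)
    (h2 : ∀ x ∈ parts ⟨1, by omega⟩, Even x)
    (h3 : ∀ x ∈ parts ⟨2, by omega⟩, Even x)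
    (hreal : realizable d n parts) :
    (∀ x ∈ parts ⟨1, by omega⟩, x ≤ d / k) ∧
    (∀ x ∈ parts ⟨2, by omega⟩, x ≤ d / k) ∧
    (∀ i : Fin n, 3 ≤ (i : ℕ) → ∀ x ∈ parts i, x ≤ d / (2 * k)) := by
  obtain ⟨τ, hτ, htrans, hparts⟩ := hreal
  have : NeZero k := ⟨by omega⟩
  have hcyc : ∀ i, ∀ ℓ ∈ fullCycleType (τ i), dihedralMonodromy k n i ^ ℓ = 1 := by
    rintro ⟨_ | _ | _ | i, hi⟩ ℓ hℓ <;> rw [hparts] at hℓ <;>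
      refine orderOf_dvd_iff_pow_eq_one.1 ?_
    · simpa [dihedralMonodromy, DihedralGroup.orderOf_r_one] using h1 ℓ hℓ
    · simpa [dihedralMonodromy, ← even_iff_two_dvd] using h2 ℓ hℓ
    · simpa [dihedralMonodromy, ← even_iff_two_dvd] using h3 ℓ hℓ
    · rw [dihedralMonodromy_of_three_le k (by simp), orderOf_one]
      exact one_dvd ℓ
  have hsphere : n * Fintype.card (Fin d) + 2 ≤
      ∑ i, (fullCycleType (τ i)).card + 2 * Fintype.card (Fin d) := by
    have : (n - 2) * d + 2 * d = n * d := by rw [← add_mul, Nat.sub_add_cancel (by omega)]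
    simp only [hparts, hcard, Fintype.card_fin]
    omega
  have hbound := card_mul_le_orderOf_mul_card τ _ hτ (list_prod_ofFn_dihedralMonodromy k hn)
    (closure_range_dihedralMonodromy k hn) htrans hcyc hsphere
  simp only [DihedralGroup.card, Fintype.card_fin, hparts] at hbound
  refine ⟨fun x hx => ?_, fun x hx => ?_, fun i hi x hx => ?_⟩ <;>
    refine (Nat.le_div_iff_mul_le (by omega)).2 ?_
  · linarith [(by simpa [dihedralMonodromy] using hbound _ hx : 2 * k * x ≤ 2 * d)]
  · linarith [(by simpa [dihedralMonodromy] using hbound _ hx : 2 * k * x ≤ 2 * d)]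
  · linarith [(by simpa [dihedralMonodromy_of_three_le k hi] using hbound i hx : 2 * k * x ≤ d)]
end

section
/- Let 1 < k < d with k dividing d, and let τ ∈ S_d have cycle lengths d₁, …, d_m (counting each fixed point as a cycle of length 1). Then τ admits a block decomposition of order k if and only if the index set {1, …, m} can be partitioned into nonempty sets D₁, …, D_t for which there exist positive integers p₁, …, p_t such that for every j, p_j divides d_i for all i ∈ D_j and Σ_{i ∈ D_j} d_i / p_j = k. Moreover, in that case there is a block decomposition of order k for which the induced permutation τ̂ of the d/k blocks has multiset of cycle lengths exactly {p₁, …, p_t}, and conversely, for every block decomposition of order k of τ there exist such D₁, …, D_t and p₁, …, p_t for which the induced permutation τ̂ has multiset of cycle lengths {p₁, …, p_t}. -/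
/-- A block decomposition of order `k` for a permutation `τ` of `{1,…,d}`:
a partition of `{1,…,d}` into `d/k` blocks, each of cardinality `k`, such that
`τ` maps each block onto a block. -/
structure BlockDecomp (d k : ℕ) (τ : Equiv.Perm (Fin d)) where
  blocks : Finset (Finset (Fin d))
  card_blocks : blocks.card = d / k
  card_each : ∀ B ∈ blocks, B.card = k
  covers : ∀ x : Fin d, ∃ B ∈ blocks, x ∈ B
  pairwise_disjoint : ∀ B ∈ blocks, ∀ C ∈ blocks, B ≠ C → Disjoint B C
  image_mem : ∀ B ∈ blocks, B.image τ ∈ blocks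

/-- `σ` is the permutation of the blocks of `D` induced by `τ`. -/
def IsInduced {d k : ℕ} {τ : Equiv.Perm (Fin d)} (D : BlockDecomp d k τ)
    (σ : Equiv.Perm {B // B ∈ D.blocks}) : Prop :=
  ∀ B : {B // B ∈ D.blocks}, (σ B : Finset (Fin d)) = (B : Finset (Fin d)).image τ

/-- The combinatorial condition of Lemma 5.2: the multiset of cycle lengths of
`τ` is partitioned into nonempty multisets `D₁, …, D_t` with positive integers
`p₁, …, p_t` such that `p_j` divides every element of `D_j` and
`∑_{x ∈ D_j} x / p_j = k`. -/
def IsBlockData {d : ℕ} (τ : Equiv.Perm (Fin d)) (k t : ℕ)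
    (D : Fin t → Multiset ℕ) (p : Fin t → ℕ) : Prop :=
  (∑ j, D j) = fullCycleType τ ∧
  ∀ j, D j ≠ 0 ∧ 0 < p j ∧ (∀ x ∈ D j, p j ∣ x) ∧
    ((D j).map (fun x => x / p j)).sum = k

/-
A block decomposition of order `k` together with its induced permutation `σ` is the same thing
as a map `φ` onto the blocks with `φ ∘ τ = σ ∘ φ` all of whose fibres have `k` points.
For such a map, a `τ`-orbit `O` is carried onto a `σ`-orbit `Ω`, and `τ ^ i` moves the points of
`O` lying over `b` onto those lying over `σ ^ i b`; so `p = |Ω|` divides `|O|` and `O` meets each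
fibre over `Ω` in `|O| / p` points. Grouping the `τ`-orbits by the `σ`-orbit they land in gives the
`D_j`, and `∑ |O| / p_j = k` is the size of one fibre.
Conversely, given the grouping, map `Fin d` to `Σ j, ℤ/p_j`, on which `σ` adds `1` in each summand:
for an orbit `O` of the `j`-th group with base point `x_O`, send `τ ^ n x_O` to `n mod p_j` in the
`j`-th summand. This is well defined because `p_j ∣ |O|`, and its fibres are the blocks.
-/

open Equiv Finset Function

namespace Multiset

variable {α γ ι : Type*}

lemma eq_of_mem_of_nodup_sum [DecidableEq ι] {s : Finset ι} {G : ι → Multiset α}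
    (h : (∑ i ∈ s, G i).Nodup) {i j : ι} (hi : i ∈ s) (hj : j ∈ s) {a : α}
    (hai : a ∈ G i) (haj : a ∈ G j) : i = j := by
  by_contra hne
  rw [← Finset.add_sum_erase s G hi, nodup_add] at h
  exact disjoint_left.1 h.2.2 hai (mem_sum.2 ⟨j, Finset.mem_erase.2 ⟨Ne.symm hne, hj⟩, haj⟩)

variable [DecidableEq α]

lemma exists_le_map_eq {f : α → γ} {m : Multiset α} {s : Multiset γ} (h : s ≤ m.map f) :
    ∃ m' ≤ m, m'.map f = s := by
  induction s using Multiset.induction_on generalizing m with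
  | empty => exact ⟨0, zero_le m, map_zero f⟩
  | cons c s ih =>
    obtain ⟨a, ha, rfl⟩ := mem_map.1 (mem_of_le h (mem_cons_self _ _))
    rw [← cons_erase ha, map_cons, cons_le_cons_iff] at h
    obtain ⟨m', hm', rfl⟩ := ih h
    exact ⟨a ::ₘ m', (cons_le_cons a hm').trans (cons_erase ha).le, map_cons f a m'⟩

lemma exists_sum_eq_of_sum_eq_map [DecidableEq ι] (s : Finset ι) {D : ι → Multiset γ}
    {f : α → γ} {m : Multiset α} (h : ∑ i ∈ s, D i = m.map f) :
    ∃ G : ι → Multiset α, ∑ i ∈ s, G i = m ∧ ∀ i ∈ s, (G i).map f = D i := by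
  induction s using Finset.induction_on generalizing m with
  | empty =>
    rw [Finset.sum_empty, eq_comm, map_eq_zero] at h
    exact ⟨fun _ => 0, by simp [h], by simp⟩
  | insert a s ha ih =>
    rw [Finset.sum_insert ha] at h
    obtain ⟨m₀, hm₀, hD⟩ := exists_le_map_eq (h ▸ le_add_right (D a) _)
    rw [← add_tsub_cancel_of_le hm₀, map_add, hD, add_right_inj] at h
    obtain ⟨G, hG, hGD⟩ := ih h
    have hG_update : ∀ i ∈ s, Function.update G a m₀ i = G i := fun i hi =>
      Function.update_of_ne (ne_of_mem_of_not_mem hi ha) _ _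
    refine ⟨Function.update G a m₀, ?_, fun i hi => ?_⟩
    · rw [Finset.sum_insert ha, Function.update_self, Finset.sum_congr rfl hG_update, hG,
        add_tsub_cancel_of_le hm₀]
    · rcases Finset.mem_insert.1 hi with rfl | hi
      · rw [Function.update_self, hD]
      · rw [hG_update i hi, hGD i hi]

end Multiset

namespace Equiv.Perm

section Orbits

variable {α : Type*} [Fintype α] [DecidableEq α]

def orbitFinset (τ : Perm α) (x : α) : Finset α := {y | τ.SameCycle x y}

def orbits (τ : Perm α) : Finset (Finset α) := univ.image τ.orbitFinset

variable {τ : Perm α} {x y : α}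

@[simp] lemma mem_orbitFinset : y ∈ τ.orbitFinset x ↔ τ.SameCycle x y := by
  simp [orbitFinset]

lemma self_mem_orbitFinset (τ : Perm α) (x : α) : x ∈ τ.orbitFinset x :=
  mem_orbitFinset.2 SameCycle.rfl

lemma mem_orbits {O : Finset α} : O ∈ τ.orbits ↔ ∃ x, τ.orbitFinset x = O := by
  simp [orbits]

lemma orbitFinset_mem_orbits (τ : Perm α) (x : α) : τ.orbitFinset x ∈ τ.orbits :=
  mem_orbits.2 ⟨x, rfl⟩

lemma orbitFinset_eq_iff : τ.orbitFinset x = τ.orbitFinset y ↔ τ.SameCycle x y := by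
  refine ⟨fun h => mem_orbitFinset.1 (h ▸ self_mem_orbitFinset τ y), fun h => ?_⟩
  ext z
  simp only [mem_orbitFinset]
  exact ⟨h.symm.trans, h.trans⟩

lemma SameCycle.orbitFinset_eq (h : τ.SameCycle x y) : τ.orbitFinset x = τ.orbitFinset y :=
  orbitFinset_eq_iff.2 h

lemma orbitFinset_eq_iff_mem {O : Finset α} (hO : O ∈ τ.orbits) :
    τ.orbitFinset x = O ↔ x ∈ O := by
  obtain ⟨y, rfl⟩ := mem_orbits.1 hO
  exact ⟨fun h => h ▸ self_mem_orbitFinset τ x,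
    fun h => (mem_orbitFinset.1 h).symm.orbitFinset_eq⟩

lemma orbitFinset_apply (τ : Perm α) (x : α) : τ.orbitFinset (τ x) = τ.orbitFinset x :=
  (sameCycle_apply_left.2 SameCycle.rfl).orbitFinset_eq

lemma isCycleOn_orbitFinset (τ : Perm α) (x : α) : τ.IsCycleOn (τ.orbitFinset x) := by
  refine ⟨τ.bijOn fun y => ?_, fun y hy z hz => ?_⟩
  · simp [sameCycle_apply_right]
  · exact (mem_orbitFinset.1 hy).symm.trans (mem_orbitFinset.1 hz)

lemma card_orbitFinset_pos (τ : Perm α) (x : α) : 0 < #(τ.orbitFinset x) :=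
  card_pos.2 ⟨x, self_mem_orbitFinset τ x⟩

lemma orbitFinset_of_apply_eq (h : τ x = x) : τ.orbitFinset x = {x} := by
  ext y
  simp only [mem_orbitFinset, mem_singleton]
  exact ⟨fun hy => (hy.eq_of_left h).symm, fun hy => hy ▸ SameCycle.rfl⟩

@[simp] lemma orbitFinset_one (x : α) : (1 : Perm α).orbitFinset x = {x} :=
  orbitFinset_of_apply_eq rfl

lemma orbitFinset_of_apply_ne (h : τ x ≠ x) : τ.orbitFinset x = (τ.cycleOf x).support := by
  ext y
  rw [mem_orbitFinset, mem_support_cycleOf_iff' h]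

lemma sum_card_orbits (τ : Perm α) : ∑ O ∈ τ.orbits, #O = Fintype.card α := by
  rw [← card_univ, card_eq_sum_card_fiberwise (f := τ.orbitFinset) (t := τ.orbits)
    fun x _ => orbitFinset_mem_orbits τ x]
  refine sum_congr rfl fun O hO => congrArg card ?_
  ext x
  simp [orbitFinset_eq_iff_mem hO]

lemma orbits_filter_two_le_card (τ : Perm α) :
    {O ∈ τ.orbits | 2 ≤ #O} = τ.cycleFactorsFinset.image support := by
  ext O
  simp only [mem_filter, mem_orbits, mem_image]
  constructor
  · rintro ⟨⟨x, rfl⟩, hO⟩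
    have hx : τ x ≠ x := fun h => by simp [orbitFinset_of_apply_eq h] at hO
    exact ⟨τ.cycleOf x, cycleOf_mem_cycleFactorsFinset_iff.2 (mem_support.2 hx),
      (orbitFinset_of_apply_ne hx).symm⟩
  · rintro ⟨c, hc, rfl⟩
    obtain ⟨x, hx⟩ := (mem_cycleFactorsFinset_iff.1 hc).1.nonempty_support
    have hxτ : τ x ≠ x := mem_support.1 (mem_cycleFactorsFinset_support_le hc hx)
    rw [cycle_is_cycleOf hx hc, ← orbitFinset_of_apply_ne hxτ]
    exact ⟨⟨x, rfl⟩,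
      orbitFinset_of_apply_ne hxτ ▸ two_le_card_support_cycleOf_iff.2 hxτ⟩

lemma support_injOn_cycleFactorsFinset (τ : Perm α) :
    Set.InjOn support (τ.cycleFactorsFinset : Set (Perm α)) := by
  intro c hc c' hc' h
  obtain ⟨x, hx⟩ := (mem_cycleFactorsFinset_iff.1 hc).1.nonempty_support
  rw [cycle_is_cycleOf hx hc, cycle_is_cycleOf (h ▸ hx) hc']

theorem _root_.fullCycleType_eq_map_card_orbits (τ : Perm α) :
    fullCycleType τ = τ.orbits.val.map card := by
  set M := τ.orbits.val.map card
  have hlarge : M.filter (2 ≤ ·) = τ.cycleType := by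
    simp only [M, Multiset.filter_map, Function.comp_def, ← filter_val, orbits_filter_two_le_card]
    rw [image_val_of_injOn (support_injOn_cycleFactorsFinset τ), Multiset.map_map, cycleType_def]
  have hsmall : M.filter (¬ 2 ≤ ·) = Multiset.replicate (M.filter (¬ 2 ≤ ·)).card 1 := by
    refine Multiset.eq_replicate.2 ⟨rfl, fun n hn => ?_⟩
    obtain ⟨hn, hn2⟩ := Multiset.mem_filter.1 hn
    obtain ⟨O, hO, rfl⟩ := Multiset.mem_map.1 hn
    obtain ⟨x, rfl⟩ := mem_orbits.1 (mem_val.mp hO)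
    have := card_orbitFinset_pos τ x
    omega
  have hsum : (M.filter (¬ 2 ≤ ·)).card = Fintype.card α - τ.cycleType.sum := by
    have h := congrArg Multiset.sum (Multiset.filter_add_not (2 ≤ ·) M)
    rw [Multiset.sum_add, hlarge, hsmall, Multiset.sum_replicate, smul_eq_mul, mul_one] at h
    have hM : M.sum = Fintype.card α := by rw [← sum_card_orbits τ, sum_eq_multiset_sum]
    omega
  rw [fullCycleType, ← hsum, ← hsmall, ← hlarge, Multiset.filter_add_not]

end Orbits

section Semiconj

variable {α β : Type*} {τ : Perm α} {σ : Perm β} {φ : α → β}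

lemma _root_.Function.Semiconj.perm_pow (h : Semiconj φ τ σ) (n : ℕ) :
    Semiconj φ ⇑(τ ^ n) ⇑(σ ^ n) := by
  simpa only [coe_pow] using h.iterate_right n

lemma _root_.Function.Semiconj.perm_zpow (h : Semiconj φ τ σ) (n : ℤ) :
    Semiconj φ ⇑(τ ^ n) ⇑(σ ^ n) := by
  cases n with
  | ofNat n => simpa only [Int.ofNat_eq_natCast, zpow_natCast] using h.perm_pow n
  | negSucc n =>
    simp only [zpow_negSucc]
    exact (h.perm_pow (n + 1)).inverses_right (τ ^ (n + 1)).apply_symm_apply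
      (σ ^ (n + 1)).symm_apply_apply

lemma _root_.Function.Semiconj.perm_sameCycle (h : Semiconj φ τ σ) {x y : α}
    (hxy : τ.SameCycle x y) : σ.SameCycle (φ x) (φ y) := by
  obtain ⟨i, rfl⟩ := hxy
  exact ⟨i, (h.perm_zpow i x).symm⟩

lemma pow_apply_eq_pow_apply_of_modEq {y : β} {N m m' : ℕ} (hN : (σ ^ N) y = y)
    (h : m ≡ m' [MOD N]) : (σ ^ m) y = (σ ^ m') y := by
  have hper : IsPeriodicPt σ N y := by rwa [IsPeriodicPt, IsFixedPt, ← coe_pow]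
  rw [coe_pow, coe_pow, ← hper.iterate_mod_apply, h, hper.iterate_mod_apply]

variable [Fintype α] [DecidableEq α]

lemma exists_semiconj_of_periodic (τ : Perm α) (σ : Perm β) (b : α → β)
    (hb : ∀ x, b (τ x) = b x) (hper : ∀ x, (σ ^ #(τ.orbitFinset x)) (b x) = b x) :
    ∃ φ : α → β, Semiconj φ τ σ ∧ ∀ x, σ.SameCycle (b x) (φ x) := by
  -- `φ (τ ^ n x₀) = σ ^ n (b x₀)` for a base point `x₀` of each orbit
  let base : α → α := fun x => (⟦x⟧ : Quotient (SameCycle.setoid τ)).out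
  have hbase : ∀ x, τ.SameCycle (base x) x := fun x =>
    Quotient.mk_out (s := SameCycle.setoid τ) x
  have hbase_apply : ∀ x, base (τ x) = base x := fun x =>
    congrArg Quotient.out (Quotient.sound (sameCycle_apply_left.2 SameCycle.rfl))
  choose n hn using fun x => (hbase x).exists_nat_pow_eq
  refine ⟨fun x => (σ ^ n x) (b x), fun x => ?_, fun x => ⟨n x, by rw [zpow_natCast]⟩⟩
  have hmod : n (τ x) ≡ n x + 1 [MOD #(τ.orbitFinset x)] := by
    rw [← (hbase x).orbitFinset_eq, ← (isCycleOn_orbitFinset τ (base x)).pow_apply_eq_pow_apply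
      (self_mem_orbitFinset τ _), pow_succ', mul_apply, hn, ← hbase_apply, hn]
  simp only [hb, pow_apply_eq_pow_apply_of_modEq (hper x) hmod, pow_succ', mul_apply]

variable [DecidableEq β]

lemma card_filter_orbitFinset_apply_eq_zpow (h : Semiconj φ τ σ) (x : α) (c : β) (i : ℤ) :
    #{y ∈ τ.orbitFinset x | φ y = (σ ^ i) c} = #{y ∈ τ.orbitFinset x | φ y = c} := by
  have hinv : ∀ y, (τ ^ i) ((τ ^ (-i)) y) = y := fun y => by
    rw [← mul_apply, ← zpow_add, add_neg_cancel, zpow_zero, one_apply]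
  have hinv' : ∀ y, (τ ^ (-i)) ((τ ^ i) y) = y := fun y => by
    rw [← mul_apply, ← zpow_add, neg_add_cancel, zpow_zero, one_apply]
  symm
  refine card_nbij' ⇑(τ ^ i) ⇑(τ ^ (-i)) (fun y hy => ?_) (fun y hy => ?_)
    (fun y _ => hinv' y) (fun y _ => hinv y)
  · simp only [coe_filter, Set.mem_ofPred_eq, mem_orbitFinset] at hy ⊢
    exact ⟨sameCycle_zpow_right.2 hy.1, by rw [h.perm_zpow, hy.2]⟩
  · simp only [coe_filter, Set.mem_ofPred_eq, mem_orbitFinset] at hy ⊢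
    refine ⟨sameCycle_zpow_right.2 hy.1, ?_⟩
    rw [h.perm_zpow, hy.2, ← mul_apply, ← zpow_add, neg_add_cancel, zpow_zero, one_apply]

variable [Fintype β]

def orbitsOver (τ : Perm α) (φ : α → β) (Ω : Finset β) : Finset (Finset α) :=
  {O ∈ τ.orbits | O.image φ = Ω}

lemma image_orbitFinset (h : Semiconj φ τ σ) (x : α) :
    (τ.orbitFinset x).image φ = σ.orbitFinset (φ x) := by
  ext c
  simp only [mem_image, mem_orbitFinset]
  constructor
  · rintro ⟨y, hy, rfl⟩
    exact h.perm_sameCycle hy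
  · rintro ⟨i, rfl⟩
    exact ⟨(τ ^ i) x, ⟨i, rfl⟩, h.perm_zpow i x⟩

lemma orbitFinset_mem_orbitsOver_iff (h : Semiconj φ τ σ) {x : α} {b : β} :
    τ.orbitFinset x ∈ τ.orbitsOver φ (σ.orbitFinset b) ↔ σ.SameCycle (φ x) b := by
  simp [orbitsOver, orbitFinset_mem_orbits, image_orbitFinset h, orbitFinset_eq_iff]

lemma sum_val_orbitsOver (h : Semiconj φ τ σ) :
    ∑ Ω ∈ σ.orbits, (τ.orbitsOver φ Ω).val = τ.orbits.val := by
  simp_rw [orbitsOver, ← sum_multiset_singleton]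
  refine sum_fiberwise_of_maps_to (fun O hO => ?_) _
  obtain ⟨x, rfl⟩ := mem_orbits.1 hO
  rw [image_orbitFinset h]
  exact orbitFinset_mem_orbits σ _

lemma card_filter_orbitFinset_mul_card (h : Semiconj φ τ σ) {x : α} {b : β}
    (hb : σ.SameCycle (φ x) b) :
    #{y ∈ τ.orbitFinset x | φ y = b} * #(σ.orbitFinset (φ x)) = #(τ.orbitFinset x) := by
  have hconst : ∀ c ∈ σ.orbitFinset (φ x),
      #{y ∈ τ.orbitFinset x | φ y = c} = #{y ∈ τ.orbitFinset x | φ y = b} := by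
    intro c hc
    obtain ⟨i, rfl⟩ := hb.symm.trans (mem_orbitFinset.1 hc)
    exact card_filter_orbitFinset_apply_eq_zpow h x b i
  rw [card_eq_sum_card_fiberwise (f := φ) (s := τ.orbitFinset x) (t := σ.orbitFinset (φ x))
      fun y hy => image_orbitFinset h x ▸ mem_image_of_mem φ hy,
    sum_congr rfl hconst, sum_const, smul_eq_mul, mul_comm]

lemma card_orbitFinset_dvd_of_mem_orbitsOver (h : Semiconj φ τ σ) {O : Finset α} {b : β}
    (hO : O ∈ τ.orbitsOver φ (σ.orbitFinset b)) : #(σ.orbitFinset b) ∣ #O := by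
  obtain ⟨x, rfl⟩ := mem_orbits.1 (mem_filter.1 hO).1
  have hxb := (orbitFinset_mem_orbitsOver_iff h).1 hO
  rw [← hxb.orbitFinset_eq]
  exact Dvd.intro_left _ (card_filter_orbitFinset_mul_card h SameCycle.rfl)

lemma card_fiber_eq_sum_card_div (h : Semiconj φ τ σ) (b : β) :
    #{x | φ x = b} = ∑ O ∈ τ.orbitsOver φ (σ.orbitFinset b), #O / #(σ.orbitFinset b) := by
  have hmaps : ∀ x ∈ ({x | φ x = b} : Finset α),
      τ.orbitFinset x ∈ τ.orbitsOver φ (σ.orbitFinset b) := fun x hx => by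
    rw [orbitFinset_mem_orbitsOver_iff h, (mem_filter.1 hx).2]
  rw [card_eq_sum_card_fiberwise hmaps]
  refine sum_congr rfl fun O hO => ?_
  obtain ⟨y, rfl⟩ := mem_orbits.1 (mem_filter.1 hO).1
  have hyb := (orbitFinset_mem_orbitsOver_iff h).1 hO
  rw [← hyb.orbitFinset_eq, ← card_filter_orbitFinset_mul_card h hyb,
    Nat.mul_div_cancel _ (card_orbitFinset_pos σ _)]
  congr 1
  ext z
  simp [orbitFinset_eq_iff, and_comm, sameCycle_comm]

end Semiconj

end Equiv.Perm

theorem fullCycleType_eq_of_semiconj {β γ : Type*} [Fintype β] [DecidableEq β] [Fintype γ]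
    [DecidableEq γ] {σ : Perm β} {σ' : Perm γ} (e : β ≃ γ) (h : Semiconj e σ σ') :
    fullCycleType σ' = fullCycleType σ := by
  have horbits : σ'.orbits = σ.orbits.image (Finset.image e) := by
    rw [Perm.orbits, Perm.orbits, image_image, ← image_univ_equiv e, image_image]
    exact image_congr fun b _ => (Perm.image_orbitFinset h b).symm
  rw [fullCycleType_eq_map_card_orbits, fullCycleType_eq_map_card_orbits, horbits,
    image_val_of_injOn (image_injective e.injective).injOn, Multiset.map_map]
  exact Multiset.map_congr rfl fun O _ => card_image_of_injective O e.injective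

section Rotation

open Equiv.Perm

variable {ι : Type*} (p : ι → ℕ)

def sigmaAddOne : Perm (Σ i, ZMod (p i)) := Equiv.sigmaCongrRight fun _ => Equiv.addRight 1

lemma sigmaAddOne_pow_apply (n : ℕ) (i : ι) (r : ZMod (p i)) :
    (sigmaAddOne p ^ n) ⟨i, r⟩ = ⟨i, r + n⟩ := by
  induction n with
  | zero => simp
  | succ n ih =>
    rw [pow_succ', mul_apply, ih]
    simp [sigmaAddOne, add_assoc]

variable [Fintype ι] [∀ i, NeZero (p i)]

lemma sameCycle_sigmaAddOne_iff {x y : Σ i, ZMod (p i)} :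
    (sigmaAddOne p).SameCycle x y ↔ x.1 = y.1 := by
  obtain ⟨i, r⟩ := x
  obtain ⟨j, s⟩ := y
  constructor
  · intro h
    obtain ⟨n, hn⟩ := h.exists_nat_pow_eq
    rw [sigmaAddOne_pow_apply] at hn
    exact (Sigma.mk.inj hn).1
  · rintro (rfl : i = j)
    refine ⟨((s - r).val : ℕ), ?_⟩
    rw [zpow_natCast, sigmaAddOne_pow_apply, ZMod.natCast_zmod_val, add_sub_cancel]

variable [DecidableEq ι]

lemma card_orbitFinset_sigmaAddOne (x : Σ i, ZMod (p i)) :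
    #((sigmaAddOne p).orbitFinset x) = p x.1 := by
  have : (sigmaAddOne p).orbitFinset x = univ.map (Embedding.sigmaMk x.1) := by
    ext ⟨j, s⟩
    simp only [mem_orbitFinset, sameCycle_sigmaAddOne_iff, mem_map, mem_univ, true_and,
      Embedding.sigmaMk_apply]
    constructor
    · rintro (rfl : x.1 = j)
      exact ⟨s, rfl⟩
    · rintro ⟨s, hs⟩
      exact (Sigma.mk.inj hs).1
  rw [this, card_map, card_univ, ZMod.card]

theorem fullCycleType_sigmaAddOne : fullCycleType (sigmaAddOne p) = univ.val.map p := by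
  let Ω : ι → Finset (Σ i, ZMod (p i)) := fun i => (sigmaAddOne p).orbitFinset ⟨i, 0⟩
  have horbits : (sigmaAddOne p).orbits = univ.image Ω := by
    ext O
    simp only [mem_orbits, mem_image, mem_univ, true_and]
    constructor
    · rintro ⟨⟨i, r⟩, rfl⟩
      exact ⟨i, orbitFinset_eq_iff.2 ((sameCycle_sigmaAddOne_iff p).2 rfl)⟩
    · rintro ⟨i, rfl⟩
      exact ⟨_, rfl⟩
  have hinj : Injective Ω := fun i j h => by
    simpa [Ω, sameCycle_sigmaAddOne_iff] using orbitFinset_eq_iff.1 h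
  rw [fullCycleType_eq_map_card_orbits, horbits, image_val_of_injOn hinj.injOn, Multiset.map_map]
  exact Multiset.map_congr rfl fun i _ => card_orbitFinset_sigmaAddOne p _

end Rotation

section Fibers

variable {α β : Type*} [Fintype α] [DecidableEq β] {τ : Perm α} {σ : Perm β} {φ : α → β}
  {k : ℕ}

lemma injective_fiber (hk : 0 < k) (hfib : ∀ b, #{x | φ x = b} = k) :
    Injective fun b => ({x | φ x = b} : Finset α) := fun b b' h => by
  obtain ⟨x, hx⟩ := card_pos.1 ((hfib b).symm ▸ hk : 0 < #{x | φ x = b})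
  have hx' := hx
  simp only at h
  rw [h] at hx'
  rw [← (mem_filter.1 hx).2, (mem_filter.1 hx').2]

lemma image_fiber [DecidableEq α] (hφ : Semiconj φ τ σ) (hfib : ∀ b, #{x | φ x = b} = k)
    (b : β) : ({x | φ x = b} : Finset α).image τ = ({x | φ x = σ b} : Finset α) := by
  refine eq_of_subset_of_card_le (fun y hy => ?_) ?_
  · obtain ⟨x, hx, rfl⟩ := mem_image.1 hy
    simp only [mem_filter, mem_univ, true_and] at hx ⊢
    rw [hφ x, hx]
  · rw [card_image_of_injective _ τ.injective, hfib, hfib]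

lemma card_eq_card_mul_of_card_fiber [Fintype β] (hfib : ∀ b, #{x | φ x = b} = k) :
    Fintype.card α = Fintype.card β * k := by
  rw [← card_univ, card_eq_sum_card_fiberwise (f := φ) (t := univ) fun x _ => mem_univ _,
    sum_congr rfl fun b _ => hfib b, sum_const, card_univ, smul_eq_mul]

end Fibers

namespace BlockDecomp

variable {d k : ℕ} {τ : Perm (Fin d)}

lemma exists_isInduced (B : BlockDecomp d k τ) : ∃ σ, IsInduced B σ := by
  let f : {S // S ∈ B.blocks} → {S // S ∈ B.blocks} := fun S =>
    ⟨S.1.image τ, B.image_mem _ S.2⟩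
  have hf : Injective f := fun S S' h =>
    Subtype.ext (image_injective τ.injective (congrArg Subtype.val h))
  exact ⟨Equiv.ofBijective f (Finite.injective_iff_bijective.1 hf), fun _ => rfl⟩

noncomputable def blockOf (B : BlockDecomp d k τ) (x : Fin d) : {S // S ∈ B.blocks} :=
  ⟨(B.covers x).choose, (B.covers x).choose_spec.1⟩

lemma blockOf_eq_iff (B : BlockDecomp d k τ) {x : Fin d} {S : {S // S ∈ B.blocks}} :
    B.blockOf x = S ↔ x ∈ S.1 := by
  have hx : x ∈ (B.blockOf x).1 := (B.covers x).choose_spec.2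
  refine ⟨fun h => h ▸ hx, fun h => ?_⟩
  by_contra hne
  exact disjoint_left.1 (B.pairwise_disjoint _ (B.blockOf x).2 _ S.2
    fun h' => hne (Subtype.ext h')) hx h

lemma semiconj_blockOf (B : BlockDecomp d k τ) {σ : Perm {S // S ∈ B.blocks}}
    (hσ : IsInduced B σ) : Semiconj B.blockOf τ σ := fun x => by
  rw [blockOf_eq_iff, hσ]
  exact mem_image_of_mem τ ((blockOf_eq_iff B).1 rfl)

lemma card_filter_blockOf_eq (B : BlockDecomp d k τ) (S : {S // S ∈ B.blocks}) :
    #{x | B.blockOf x = S} = k := by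
  simp_rw [blockOf_eq_iff, filter_mem_eq_inter, univ_inter]
  exact B.card_each _ S.2

variable {β : Type*} [Fintype β] [DecidableEq β] {σ : Perm β} {φ : Fin d → β}

def ofSemiconj (hk : 0 < k) (hφ : Semiconj φ τ σ) (hfib : ∀ b, #{x | φ x = b} = k) :
    BlockDecomp d k τ where
  blocks := univ.image fun b => ({x | φ x = b} : Finset (Fin d))
  card_blocks := by
    rw [card_image_of_injective _ (injective_fiber hk hfib), card_univ,
      ← Fintype.card_fin d, card_eq_card_mul_of_card_fiber hfib, Nat.mul_div_cancel _ hk]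
  card_each S hS := by
    obtain ⟨b, -, rfl⟩ := mem_image.1 hS
    exact hfib b
  covers x := ⟨({y | φ y = φ x} : Finset (Fin d)), mem_image_of_mem _ (mem_univ _), by simp⟩
  pairwise_disjoint S hS S' hS' hne := by
    obtain ⟨b, -, rfl⟩ := mem_image.1 hS
    obtain ⟨b', -, rfl⟩ := mem_image.1 hS'
    exact disjoint_filter.2 fun x _ h h' => hne (by rw [← h, ← h'])
  image_mem S hS := by
    obtain ⟨b, -, rfl⟩ := mem_image.1 hS
    rw [image_fiber hφ hfib]
    exact mem_image_of_mem _ (mem_univ _)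

theorem exists_isInduced_ofSemiconj (hk : 0 < k) (hφ : Semiconj φ τ σ)
    (hfib : ∀ b, #{x | φ x = b} = k) :
    ∃ σ' : Perm {S // S ∈ (ofSemiconj hk hφ hfib).blocks},
      IsInduced _ σ' ∧ fullCycleType σ' = fullCycleType σ := by
  let e : β ≃ {S // S ∈ (ofSemiconj hk hφ hfib).blocks} := Equiv.ofBijective
    (fun b => ⟨({x | φ x = b} : Finset (Fin d)), mem_image_of_mem _ (mem_univ b)⟩)
    ⟨fun b b' h => injective_fiber hk hfib (congrArg Subtype.val h), fun S => by
      obtain ⟨b, -, hb⟩ := mem_image.1 S.2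
      exact ⟨b, Subtype.ext hb⟩⟩
  refine ⟨e.permCongr σ, fun S => ?_, fullCycleType_eq_of_semiconj e fun b => by
    simp [permCongr_apply]⟩
  obtain ⟨b, rfl⟩ := e.surjective S
  simp only [permCongr_apply, symm_apply_apply]
  exact (image_fiber hφ hfib b).symm

end BlockDecomp

section OrbitData

open Equiv.Perm

variable {d k : ℕ} {τ : Perm (Fin d)}

theorem exists_isBlockData_of_semiconj {β : Type*} [Fintype β] [DecidableEq β] {σ : Perm β}
    {φ : Fin d → β} (hk : 0 < k) (hφ : Semiconj φ τ σ) (hfib : ∀ b, #{x | φ x = b} = k) :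
    ∃ (t : ℕ) (D : Fin t → Multiset ℕ) (p : Fin t → ℕ),
      IsBlockData τ k t D p ∧ fullCycleType σ = (univ.val : Multiset (Fin t)).map p := by
  let e := σ.orbits.equivFin.symm
  refine ⟨_, fun j => (τ.orbitsOver φ (e j)).val.map card, fun j => #(e j).1,
    ⟨?_, fun j => ?_⟩, ?_⟩
  · calc ∑ j, (τ.orbitsOver φ (e j)).val.map card
        = (∑ Ω ∈ σ.orbits, (τ.orbitsOver φ Ω).val).map card := by
          rw [← sum_coe_sort σ.orbits, ← e.sum_comp]
          exact (map_sum (Multiset.mapAddMonoidHom card)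
            (fun j => (τ.orbitsOver φ (e j)).val) univ).symm
      _ = fullCycleType τ := by rw [sum_val_orbitsOver hφ, fullCycleType_eq_map_card_orbits]
  · obtain ⟨b, hb⟩ := mem_orbits.1 (e j).2
    dsimp only
    rw [← hb]
    refine ⟨?_, card_orbitFinset_pos σ b, fun n hn => ?_, ?_⟩
    · obtain ⟨x, hx⟩ := card_pos.1 ((hfib b).symm ▸ hk : 0 < #{x | φ x = b})
      have hxb : τ.orbitFinset x ∈ τ.orbitsOver φ (σ.orbitFinset b) := by
        rw [orbitFinset_mem_orbitsOver_iff hφ, (mem_filter.1 hx).2]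
      simpa using ne_empty_of_mem hxb
    · obtain ⟨O, hO, rfl⟩ := Multiset.mem_map.1 hn
      exact card_orbitFinset_dvd_of_mem_orbitsOver hφ (mem_val.mp hO)
    · rw [Multiset.map_map, ← sum_eq_multiset_sum, ← hfib b, card_fiber_eq_sum_card_div hφ]
      rfl
  · rw [fullCycleType_eq_map_card_orbits,
      show (fun j => #(e j).1) = (fun Ω : σ.orbits => #Ω.1) ∘ e from rfl, ← Multiset.map_map,
      Multiset.map_univ_val_equiv, univ_eq_attach, attach_val]
    exact (Multiset.attach_map_val' _ _).symm

lemma exists_orbit_grouping {α ι : Type*} [Fintype α] [DecidableEq α] [Fintype ι]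
    [DecidableEq ι] {τ : Perm α} {D : ι → Multiset ℕ} (h : ∑ i, D i = fullCycleType τ) :
    ∃ group : α → ι, Semiconj group τ (1 : Perm ι) ∧
      ∀ i, (τ.orbitsOver group {i}).val.map card = D i := by
  rw [fullCycleType_eq_map_card_orbits] at h
  obtain ⟨G, hGsum, hGD⟩ := Multiset.exists_sum_eq_of_sum_eq_map univ h
  have hnodup : (∑ i, G i).Nodup := hGsum ▸ τ.orbits.nodup
  have hunique : ∀ {O i j}, O ∈ G i → O ∈ G j → i = j := fun hi hj =>
    Multiset.eq_of_mem_of_nodup_sum hnodup (mem_univ _) (mem_univ _) hi hj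
  have horbits : ∀ {O i}, O ∈ G i → O ∈ τ.orbits := fun hO =>
    mem_val.mp (hGsum ▸ Multiset.mem_sum.2 ⟨_, mem_univ _, hO⟩)
  choose group hgroup using fun x =>
    Multiset.mem_sum.1 (hGsum ▸ mem_val.mpr (orbitFinset_mem_orbits τ x))
  replace hgroup := fun x => (hgroup x).2
  have hsemi : Semiconj group τ (1 : Perm ι) := fun x =>
    hunique (orbitFinset_apply τ x ▸ hgroup (τ x)) (hgroup x)
  refine ⟨group, hsemi, fun i => ?_⟩
  rw [← hGD i (mem_univ i)]
  refine congrArg _ ((Multiset.Nodup.ext (nodup _) (Multiset.nodup_of_le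
    (single_le_sum (fun j _ => Multiset.zero_le (G j)) (mem_univ i)) hnodup)).2 fun O => ?_)
  rw [mem_val, ← orbitFinset_one]
  constructor
  · intro hO
    obtain ⟨x, rfl⟩ := mem_orbits.1 (mem_filter.1 hO).1
    rw [orbitFinset_mem_orbitsOver_iff hsemi, sameCycle_one] at hO
    exact hO ▸ hgroup x
  · intro hO
    obtain ⟨x, rfl⟩ := mem_orbits.1 (horbits hO)
    rw [orbitFinset_mem_orbitsOver_iff hsemi, sameCycle_one]
    exact hunique (hgroup x) hO

lemma exists_semiconj_sigmaAddOne_of_isBlockData {t : ℕ} {D : Fin t → Multiset ℕ}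
    {p : Fin t → ℕ} (h : IsBlockData τ k t D p) :
    ∃ φ : Fin d → Σ j, ZMod (p j),
      Semiconj φ τ (sigmaAddOne p) ∧ ∀ b, #{x | φ x = b} = k := by
  obtain ⟨hsum, hD⟩ := h
  have : ∀ j, NeZero (p j) := fun j => ⟨(hD j).2.1.ne'⟩
  obtain ⟨group, hgroup, hgroupD⟩ := exists_orbit_grouping hsum
  have hmem : ∀ x, τ.orbitFinset x ∈ τ.orbitsOver group {group x} := fun x => by
    rw [← orbitFinset_one, orbitFinset_mem_orbitsOver_iff hgroup]
  have hdvd : ∀ x, p (group x) ∣ #(τ.orbitFinset x) := fun x =>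
    (hD _).2.2.1 _ (hgroupD _ ▸ Multiset.mem_map_of_mem card (mem_val.mpr (hmem x)))
  obtain ⟨φ, hφ, hφgroup⟩ := exists_semiconj_of_periodic τ (sigmaAddOne p)
    (fun x => ⟨group x, 0⟩) (fun x => by rw [hgroup x, one_apply])
    (fun x => by rw [sigmaAddOne_pow_apply, zero_add, (ZMod.natCast_eq_zero_iff _ _).2 (hdvd x)])
  have hφ_fst : ∀ x, (φ x).1 = group x := fun x =>
    ((sameCycle_sigmaAddOne_iff p).1 (hφgroup x)).symm
  refine ⟨φ, hφ, fun b => ?_⟩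
  have hover : τ.orbitsOver φ ((sigmaAddOne p).orbitFinset b) = τ.orbitsOver group {b.1} := by
    refine filter_congr fun O hO => ?_
    obtain ⟨y, rfl⟩ := mem_orbits.1 hO
    rw [image_orbitFinset hφ, image_orbitFinset hgroup, orbitFinset_one, orbitFinset_eq_iff,
      sameCycle_sigmaAddOne_iff, hφ_fst, singleton_inj]
  have hk := (hD b.1).2.2.2
  rw [← hgroupD, Multiset.map_map] at hk
  rw [card_fiber_eq_sum_card_div hφ, hover, card_orbitFinset_sigmaAddOne, sum_eq_multiset_sum]
  exact hk

theorem exists_blockDecomp_of_isBlockData (hk : 0 < k) {t : ℕ} {D : Fin t → Multiset ℕ}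
    {p : Fin t → ℕ} (h : IsBlockData τ k t D p) :
    ∃ (B : BlockDecomp d k τ) (σ : Perm {S // S ∈ B.blocks}),
      IsInduced B σ ∧ fullCycleType σ = (univ.val : Multiset (Fin t)).map p := by
  have : ∀ j, NeZero (p j) := fun j => ⟨(h.2 j).2.1.ne'⟩
  obtain ⟨φ, hφ, hfib⟩ := exists_semiconj_sigmaAddOne_of_isBlockData h
  obtain ⟨σ, hσ, hσφ⟩ := BlockDecomp.exists_isInduced_ofSemiconj hk hφ hfib
  exact ⟨_, σ, hσ, hσφ.trans (fullCycleType_sigmaAddOne p)⟩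

theorem BlockDecomp.exists_isBlockData (hk : 0 < k) (B : BlockDecomp d k τ)
    {σ : Perm {S // S ∈ B.blocks}} (hσ : IsInduced B σ) :
    ∃ (t : ℕ) (D : Fin t → Multiset ℕ) (p : Fin t → ℕ),
      IsBlockData τ k t D p ∧ fullCycleType σ = (univ.val : Multiset (Fin t)).map p :=
  exists_isBlockData_of_semiconj hk (B.semiconj_blockOf hσ) B.card_filter_blockOf_eq

end OrbitData

theorem stmt12_general (d k : ℕ) (hk1 : 1 < k)
    (τ : Equiv.Perm (Fin d)) :
    (Nonempty (BlockDecomp d k τ) ↔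
      ∃ (t : ℕ) (D : Fin t → Multiset ℕ) (p : Fin t → ℕ), IsBlockData τ k t D p) ∧
    (∀ (t : ℕ) (D : Fin t → Multiset ℕ) (p : Fin t → ℕ), IsBlockData τ k t D p →
      ∃ (B : BlockDecomp d k τ) (σ : Equiv.Perm {S // S ∈ B.blocks}),
        IsInduced B σ ∧
        fullCycleType σ = (Finset.univ.val : Multiset (Fin t)).map p) ∧
    (∀ (B : BlockDecomp d k τ) (σ : Equiv.Perm {S // S ∈ B.blocks}),
      IsInduced B σ →
      ∃ (t : ℕ) (D : Fin t → Multiset ℕ) (p : Fin t → ℕ),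
        IsBlockData τ k t D p ∧
        fullCycleType σ = (Finset.univ.val : Multiset (Fin t)).map p) := by
  have hk : 0 < k := by omega
  refine ⟨⟨fun ⟨B⟩ => ?_, fun ⟨t, D, p, h⟩ => ?_⟩,
    fun t D p h => exists_blockDecomp_of_isBlockData hk h,
    fun B σ hσ => B.exists_isBlockData hk hσ⟩
  · obtain ⟨σ, hσ⟩ := B.exists_isInduced
    obtain ⟨t, D, p, h, -⟩ := B.exists_isBlockData hk hσ
    exact ⟨t, D, p, h⟩
  · obtain ⟨B, -⟩ := exists_blockDecomp_of_isBlockData hk h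
    exact ⟨B⟩

/-- Lemma 5.2. `τ` admits a block decomposition of order `k`
iff its cycle lengths admit a grouping as in `IsBlockData`; moreover the cycle
structure of the induced permutation `τ̂` on the blocks is `(p₁, …, p_t)`, in
both directions. -/
theorem stmt12 (d k : ℕ) (hk1 : 1 < k) (hkd : k < d) (hdvd : k ∣ d)
    (τ : Equiv.Perm (Fin d)) :
    (Nonempty (BlockDecomp d k τ) ↔
      ∃ (t : ℕ) (D : Fin t → Multiset ℕ) (p : Fin t → ℕ), IsBlockData τ k t D p) ∧
    (∀ (t : ℕ) (D : Fin t → Multiset ℕ) (p : Fin t → ℕ), IsBlockData τ k t D p →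
      ∃ (B : BlockDecomp d k τ) (σ : Equiv.Perm {S // S ∈ B.blocks}),
        IsInduced B σ ∧
        fullCycleType σ = (Finset.univ.val : Multiset (Fin t)).map p) ∧
    (∀ (B : BlockDecomp d k τ) (σ : Equiv.Perm {S // S ∈ B.blocks}),
      IsInduced B σ →
      ∃ (t : ℕ) (D : Fin t → Multiset ℕ) (p : Fin t → ℕ),
        IsBlockData τ k t D p ∧
        fullCycleType σ = (Finset.univ.val : Multiset (Fin t)).map p) :=
  stmt12_general d k hk1 τ
end
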